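/- Let C : ℕ → ℝ be a sequence with C(p) ≥ 0 for all p and C(0) = 0, such that for every z ∈ (0,1/4) the series ∑_{p≥1} C(p)·z^p converges with sum (3/2)·z/√(π·(1-z)·(1-4z)³). Define h(p) = 2√π·4^{-p}·C(p)/p for p ≥ 1. Then there exists a constant K > 0 such that h(p) ≤ K/√p for every p ≥ 1. -/

import Mathlib

/-!
A power series with nonnegative coefficients that converges on `(0, r)` is determined there by its
sum: the difference series then converges absolutely on the disc of radius `r`, and the identity
theorem applies. Hence `C` is the coefficient sequence of
`3 / (2 √π) · z · (1 - z) ^ (-1/2) · (1 - 4 z) ^ (-3/2)`, a Cauchy product of two binomial series.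
The coefficients of `(1 - z) ^ (-1/2)` are at most `1` and those of `(1 - z) ^ (-3/2)` at most
`2 √(j + 1)`, so `C p ≤ √p · 4 ^ p / √π`, which gives `h p ≤ 2 / √p`.
-/

open Set Finset Filter Topology

lemma eq_of_hasSum_pow_Ioo {a b : ℕ → ℝ} {f : ℝ → ℝ} {r : ℝ} (hr : 0 < r)
    (ha : ∀ n, 0 ≤ a n) (hb : ∀ n, 0 ≤ b n)
    (hfa : ∀ z ∈ Ioo 0 r, HasSum (fun n => a n * z ^ n) (f z))
    (hfb : ∀ z ∈ Ioo 0 r, HasSum (fun n => b n * z ^ n) (f z)) : a = b := by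
  set p := FormalMultilinearSeries.ofScalars ℝ (a - b)
  obtain ⟨ρ, hρ⟩ : ∃ ρ : NNReal, (ρ : ℝ) ∈ Ioo 0 r :=
    ⟨⟨r / 2, by positivity⟩, half_pos hr, half_lt_self hr⟩
  have hρp : (ρ : ENNReal) ≤ p.radius := by
    refine p.le_radius_of_summable_norm <| Summable.of_nonneg_of_le (fun _ => by positivity)
      (fun n => ?_) ((hfa ρ hρ).add (hfb ρ hρ)).summable
    rw [FormalMultilinearSeries.ofScalars_norm, Pi.sub_apply, Real.norm_eq_abs, ← add_mul]
    gcongr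
    exact (abs_sub _ _).trans (by rw [abs_of_nonneg (ha n), abs_of_nonneg (hb n)])
  have hps : HasFPowerSeriesOnBall p.sum p 0 p.radius :=
    p.hasFPowerSeriesOnBall (lt_of_lt_of_le (by simpa using hρ.1) hρp)
  have hzero : ∀ z ∈ Ioo (0 : ℝ) ρ, p.sum z = 0 := fun z hz => by
    have hz' : z ∈ Ioo (0 : ℝ) r := ⟨hz.1, hz.2.trans hρ.2⟩
    simpa [p, FormalMultilinearSeries.sum, FormalMultilinearSeries.ofScalars_apply_eq, mul_sub,
      mul_comm] using ((hfa z hz').sub (hfb z hz')).tsum_eq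
  have hU : EqOn p.sum 0 (Metric.ball 0 ρ) := by
    refine AnalyticOnNhd.eqOn_zero_of_preconnected_of_eventuallyEq_zero
      (hps.analyticOnNhd.mono ?_) (convex_ball _ _).isPreconnected (z₀ := ρ / 2) ?_ ?_
    · rw [← Metric.eball_coe]
      exact Metric.eball_subset_eball hρp
    · rw [Metric.mem_ball, dist_zero_right, Real.norm_eq_abs, abs_of_pos (half_pos hρ.1)]
      exact half_lt_self hρ.1
    · exact eventuallyEq_of_mem (Ioo_mem_nhds (half_pos hρ.1) (half_lt_self hρ.1)) hzero
  have hp : p = 0 := hps.hasFPowerSeriesAt.eq_zero_of_eventually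
    (eventuallyEq_of_mem (Metric.ball_mem_nhds 0 hρ.1) hU)
  exact sub_eq_zero.1 ((FormalMultilinearSeries.ofScalars_series_eq_zero ℝ).1 hp)

-- `[x ^ n] (1 - x) ^ (-a)`
noncomputable def negBinomCoeff (a : ℝ) (n : ℕ) : ℝ := Ring.choose (a + n - 1) n

lemma negBinomCoeff_zero (a : ℝ) : negBinomCoeff a 0 = 1 := by
  simp [negBinomCoeff]

lemma negBinomCoeff_succ (a : ℝ) (n : ℕ) :
    negBinomCoeff a (n + 1) = (a + n) / (n + 1) * negBinomCoeff a n := by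
  have h := Ring.choose_smul_choose (a + n) (Nat.le_add_left 1 n)
  simp only [Nat.choose_one_right, nsmul_eq_mul, Ring.choose_one_right, Nat.add_sub_cancel] at h
  rw [div_mul_eq_mul_div, eq_div_iff (by positivity), mul_comm]
  simp only [negBinomCoeff]
  push_cast at h ⊢
  convert h using 3; ring

lemma negBinomCoeff_nonneg {a : ℝ} (ha : 0 ≤ a) (n : ℕ) : 0 ≤ negBinomCoeff a n := by
  induction n with
  | zero => simp [negBinomCoeff_zero]
  | succ n ih => rw [negBinomCoeff_succ]; positivity

lemma negBinomCoeff_half_le_one (n : ℕ) : negBinomCoeff (1 / 2) n ≤ 1 := by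
  induction n with
  | zero => simp [negBinomCoeff_zero]
  | succ n ih =>
    rw [negBinomCoeff_succ]
    exact mul_le_one₀ (by rw [div_le_one (by positivity)]; linarith)
      (negBinomCoeff_nonneg (by norm_num) n) ih

lemma negBinomCoeff_three_halves_sq_le (n : ℕ) : negBinomCoeff (3 / 2) n ^ 2 ≤ 4 * n + 3 := by
  induction n with
  | zero => norm_num [negBinomCoeff_zero]
  | succ n ih =>
    have hratio : ((3 / 2 + n) / (n + 1) : ℝ) ^ 2 * (4 * n + 3) ≤ 4 * ((n + 1 : ℕ) : ℝ) + 3 := by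
      rw [div_pow, div_mul_eq_mul_div, div_le_iff₀ (by positivity)]
      push_cast
      nlinarith
    rw [negBinomCoeff_succ, mul_pow]
    exact (mul_le_mul_of_nonneg_left ih (by positivity)).trans hratio

lemma negBinomCoeff_three_halves_le (n : ℕ) :
    negBinomCoeff (3 / 2) n ≤ 2 * √(n + 1) := by
  rw [show (2 : ℝ) * √(n + 1) = √(4 * (n + 1)) by
    rw [Real.sqrt_mul (by norm_num), show (4 : ℝ) = 2 ^ 2 by norm_num, Real.sqrt_sq (by norm_num)]]
  exact Real.le_sqrt_of_sq_le ((negBinomCoeff_three_halves_sq_le n).trans (by linarith))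

lemma hasFPowerSeriesOnBall_one_div_one_sub_rpow (a : ℝ) :
    HasFPowerSeriesOnBall (fun x => 1 / (1 - x) ^ a)
      (FormalMultilinearSeries.ofScalars ℝ (negBinomCoeff a)) 0 1 :=
  Real.one_div_one_sub_rpow_hasFPowerSeriesOnBall_zero a

lemma hasSum_negBinomCoeff_mul_pow (a : ℝ) {x : ℝ} (hx : |x| < 1) :
    HasSum (fun n => negBinomCoeff a n * x ^ n) (1 / (1 - x) ^ a) := by
  have := (hasFPowerSeriesOnBall_one_div_one_sub_rpow a).hasSum
    (y := x) (by simpa [enorm_eq_nnnorm, ← NNReal.coe_lt_coe] using hx)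
  simpa [FormalMultilinearSeries.ofScalars_apply_eq, mul_comm] using this

lemma summable_norm_negBinomCoeff_mul_pow (a : ℝ) {x : ℝ} (hx : |x| < 1) :
    Summable (fun n => ‖negBinomCoeff a n * x ^ n‖) := by
  have := (FormalMultilinearSeries.ofScalars ℝ (negBinomCoeff a)).summable_norm_apply
    (x := x) ((Metric.eball_subset_eball (hasFPowerSeriesOnBall_one_div_one_sub_rpow a).r_le)
      (by simpa [enorm_eq_nnnorm, ← NNReal.coe_lt_coe] using hx))
  simpa [FormalMultilinearSeries.ofScalars_apply_eq, mul_comm] using this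

-- `[x ^ n] (1 - x) ^ (-a) (1 - c x) ^ (-b)`
noncomputable def negBinomMulCoeff (a b c : ℝ) (n : ℕ) : ℝ :=
  ∑ k ∈ range (n + 1), negBinomCoeff a k * (c ^ (n - k) * negBinomCoeff b (n - k))

lemma hasSum_negBinomMulCoeff_mul_pow (a b c : ℝ) {x : ℝ} (hx : |x| < 1) (hcx : |c * x| < 1) :
    HasSum (fun n => negBinomMulCoeff a b c n * x ^ n)
      (1 / (1 - x) ^ a * (1 / (1 - c * x) ^ b)) := by
  have hprod := hasSum_sum_range_mul_of_summable_norm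
    (summable_norm_negBinomCoeff_mul_pow a hx) (summable_norm_negBinomCoeff_mul_pow b hcx)
  rw [(hasSum_negBinomCoeff_mul_pow a hx).tsum_eq, (hasSum_negBinomCoeff_mul_pow b hcx).tsum_eq]
    at hprod
  refine hprod.congr_fun fun n => ?_
  rw [negBinomMulCoeff, Finset.sum_mul]
  refine Finset.sum_congr rfl fun k hk => ?_
  have hkn : k + (n - k) = n := Nat.add_sub_cancel' (Nat.lt_succ_iff.1 (Finset.mem_range.1 hk))
  rw [mul_pow, ← hkn, pow_add, hkn]
  ring

lemma negBinomMulCoeff_nonneg {a b c : ℝ} (ha : 0 ≤ a) (hb : 0 ≤ b) (hc : 0 ≤ c) (n : ℕ) :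
    0 ≤ negBinomMulCoeff a b c n :=
  Finset.sum_nonneg fun k _ => mul_nonneg (negBinomCoeff_nonneg ha k)
    (mul_nonneg (by positivity) (negBinomCoeff_nonneg hb _))

lemma negBinomMulCoeff_le (n : ℕ) :
    negBinomMulCoeff (1 / 2) (3 / 2) 4 n ≤ 2 / 3 * √(n + 1) * 4 ^ (n + 1) := by
  have hterm : ∀ k ∈ range (n + 1), negBinomCoeff (1 / 2) k *
      (4 ^ (n - k) * negBinomCoeff (3 / 2) (n - k)) ≤ 2 * √(n + 1) * 4 ^ (n - k) := by
    intro k hk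
    have h3 : negBinomCoeff (3 / 2) (n - k) ≤ 2 * √(n + 1) :=
      (negBinomCoeff_three_halves_le _).trans (by gcongr; simp)
    calc negBinomCoeff (1 / 2) k * (4 ^ (n - k) * negBinomCoeff (3 / 2) (n - k))
        ≤ 1 * (4 ^ (n - k) * (2 * √(n + 1))) := by
          gcongr
          · exact mul_nonneg (by positivity) (negBinomCoeff_nonneg (by norm_num) _)
          · exact negBinomCoeff_half_le_one k
      _ = 2 * √(n + 1) * 4 ^ (n - k) := by ring
  have hgeom : ∑ k ∈ range (n + 1), (4 : ℝ) ^ (n - k) = (4 ^ (n + 1) - 1) / 3 := by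
    have := Finset.sum_range_reflect (fun k => (4 : ℝ) ^ k) (n + 1)
    rw [Nat.add_sub_cancel] at this
    rw [this, geom_sum_eq (by norm_num)]
    norm_num
  calc negBinomMulCoeff (1 / 2) (3 / 2) 4 n
      ≤ ∑ k ∈ range (n + 1), 2 * √(n + 1) * 4 ^ (n - k) := Finset.sum_le_sum hterm
    _ = 2 * √(n + 1) * ((4 ^ (n + 1) - 1) / 3) := by rw [← Finset.mul_sum, hgeom]
    _ ≤ 2 / 3 * √(n + 1) * 4 ^ (n + 1) := by
      have : 0 ≤ √((n : ℝ) + 1) := Real.sqrt_nonneg _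
      nlinarith

-- The explicit solution: `C (p + 1) = 3 / (2 √π) · [z ^ p] (1 - z) ^ (-1/2) (1 - 4 z) ^ (-3/2)`.
noncomputable def boundaryCoeff : ℕ → ℝ
  | 0 => 0
  | n + 1 => 3 / (2 * √Real.pi) * negBinomMulCoeff (1 / 2) (3 / 2) 4 n

lemma boundaryCoeff_nonneg (p : ℕ) : 0 ≤ boundaryCoeff p := by
  cases p with
  | zero => exact le_rfl
  | succ n =>
    exact mul_nonneg (by positivity)
      (negBinomMulCoeff_nonneg (by norm_num) (by norm_num) (by norm_num) n)

lemma sqrt_pi_mul_one_sub_mul_one_sub_four_mul_pow_three {z : ℝ} (hz : z < 1 / 4) :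
    √(Real.pi * (1 - z) * (1 - 4 * z) ^ 3) =
      √Real.pi * ((1 - z) ^ (1 / 2 : ℝ) * (1 - 4 * z) ^ (3 / 2 : ℝ)) := by
  have h1 : 0 ≤ 1 - z := by linarith
  have h4 : 0 ≤ 1 - 4 * z := by linarith
  rw [Real.sqrt_mul (by positivity), Real.sqrt_mul Real.pi_pos.le, mul_assoc,
    Real.sqrt_eq_rpow (1 - z), Real.sqrt_eq_rpow ((1 - 4 * z) ^ 3), ← Real.rpow_natCast,
    ← Real.rpow_mul h4]
  norm_num

lemma hasSum_boundaryCoeff_mul_pow {z : ℝ} (hz : z ∈ Ioo (0 : ℝ) (1 / 4)) :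
    HasSum (fun p => boundaryCoeff p * z ^ p)
      (3 / 2 * z / √(Real.pi * (1 - z) * (1 - 4 * z) ^ 3)) := by
  have hx : |z| < 1 := by rw [abs_of_pos hz.1]; linarith [hz.2]
  have hcx : |4 * z| < 1 := by rw [abs_of_pos (by linarith [hz.1])]; linarith [hz.2]
  have hval : 3 / (2 * √Real.pi) * z * (1 / (1 - z) ^ (1 / 2 : ℝ) * (1 / (1 - 4 * z) ^ (3 / 2 : ℝ)))
      = 3 / 2 * z / √(Real.pi * (1 - z) * (1 - 4 * z) ^ 3) := by
    have : 0 < (1 - z) ^ (1 / 2 : ℝ) := Real.rpow_pos_of_pos (by linarith [hz.2]) _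
    have : 0 < (1 - 4 * z) ^ (3 / 2 : ℝ) := Real.rpow_pos_of_pos (by linarith [hz.2]) _
    rw [sqrt_pi_mul_one_sub_mul_one_sub_four_mul_pow_three hz.2]
    field_simp
  have hshift : HasSum (fun n => boundaryCoeff (n + 1) * z ^ (n + 1))
      (3 / 2 * z / √(Real.pi * (1 - z) * (1 - 4 * z) ^ 3)) := by
    rw [← hval]
    refine ((hasSum_negBinomMulCoeff_mul_pow _ _ _ hx hcx).mul_left _).congr_fun fun n => ?_
    rw [boundaryCoeff, pow_succ]
    ring
  have := (hasSum_nat_add_iff (f := fun p => boundaryCoeff p * z ^ p) 1).1 hshift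
  rwa [Finset.sum_range_one, boundaryCoeff, zero_mul, add_zero] at this

lemma two_mul_sqrt_pi_mul_boundaryCoeff_le (n : ℕ) :
    2 * √Real.pi * (4 : ℝ) ^ (-((n + 1 : ℕ) : ℤ)) * boundaryCoeff (n + 1) / (n + 1 : ℕ)
      ≤ 2 / √(n + 1 : ℕ) := by
  have hπ := Real.sqrt_pos.2 Real.pi_pos
  have hn : 0 < √((n : ℝ) + 1) := Real.sqrt_pos.2 (by positivity)
  rw [boundaryCoeff, zpow_neg, zpow_natCast]
  push_cast
  calc 2 * √Real.pi * (4 ^ (n + 1))⁻¹ *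
        (3 / (2 * √Real.pi) * negBinomMulCoeff (1 / 2) (3 / 2) 4 n) / (n + 1)
      = 3 * negBinomMulCoeff (1 / 2) (3 / 2) 4 n / (4 ^ (n + 1) * (n + 1)) := by
        field_simp
    _ ≤ 3 * (2 / 3 * √(n + 1) * 4 ^ (n + 1)) / (4 ^ (n + 1) * (n + 1)) := by
        gcongr
        exact negBinomMulCoeff_le n
    _ = 2 / √(n + 1) := by
        field_simp
        rw [Real.sq_sqrt (by positivity)]

theorem stmt_14_general (C : ℕ → ℝ) (hnn : ∀ p, 0 ≤ C p)
    (hgen : ∀ z ∈ Set.Ioo (0 : ℝ) (1 / 4),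
      HasSum (fun p : ℕ => C p * z ^ p)
        ((3 / 2) * z / Real.sqrt (Real.pi * (1 - z) * (1 - 4 * z) ^ 3))) :
    ∃ K > (0 : ℝ), ∀ p : ℕ, 1 ≤ p →
      2 * Real.sqrt Real.pi * (4 : ℝ) ^ (-(p : ℤ)) * C p / p ≤ K / Real.sqrt p := by
  have hC : C = boundaryCoeff := eq_of_hasSum_pow_Ioo (by norm_num) hnn boundaryCoeff_nonneg
    hgen fun _ => hasSum_boundaryCoeff_mul_pow
  refine ⟨2, two_pos, fun p hp => ?_⟩
  obtain ⟨n, rfl⟩ : ∃ n, p = n + 1 := ⟨p - 1, by omega⟩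
  rw [hC]
  exact two_mul_sqrt_pi_mul_boundaryCoeff_le n

theorem stmt_14 (C : ℕ → ℝ) (hC0 : C 0 = 0) (hnn : ∀ p, 0 ≤ C p)
    (hgen : ∀ z ∈ Set.Ioo (0 : ℝ) (1 / 4),
      HasSum (fun p : ℕ => C p * z ^ p)
        ((3 / 2) * z / Real.sqrt (Real.pi * (1 - z) * (1 - 4 * z) ^ 3))) :
    ∃ K > (0 : ℝ), ∀ p : ℕ, 1 ≤ p →
      2 * Real.sqrt Real.pi * (4 : ℝ) ^ (-(p : ℤ)) * C p / p ≤ K / Real.sqrt p :=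
  stmt_14_general C hnn hgen
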